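/- arXiv:1910.10790 — 3 statements merged into one kernel-verified Lean document; each statement's English description precedes it below -/
import Mathlib

section
/- The rank counts for semi-strict unimodal sequences are weakly increasing in n: for every integer m and all n ≥ 0, dm(m,n) ≤ dm(m,n+1). -/
/-- A semi-strict unimodal sequence, represented as
(parts before the peak, the peak, parts after the peak). -/
def IsSemiStrictUnimodal (n : ℕ) (x : List ℕ × ℕ × List ℕ) : Prop :=
  x.1.Pairwise (· < ·) ∧ x.2.2.Pairwise (· ≥ ·) ∧
  (∀ y ∈ x.1, 0 < y ∧ y < x.2.1) ∧ (∀ y ∈ x.2.2, 0 < y ∧ y < x.2.1) ∧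
  0 < x.2.1 ∧ x.1.sum + x.2.1 + x.2.2.sum = n

/-- the rank: number of parts after the peak minus number of parts before the peak -/
def unimodalRank (x : List ℕ × ℕ × List ℕ) : ℤ := (x.2.2.length : ℤ) - x.1.length

/-- `dm(m,n)`: the number of semi-strict unimodal sequences of size `n` and rank `m` -/
noncomputable def dmCount (m : ℤ) (n : ℕ) : ℕ :=
  Set.ncard {x : List ℕ × ℕ × List ℕ | IsSemiStrictUnimodal n x ∧ unimodalRank x = m}

/-! The map adding one to the peak injects sequences of size `n` into those of size `n + 1`
without changing the rank; the counts are finite because every part and every length is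
bounded by the size. -/

lemma List.finite_length_le_forall_mem {α : Type*} {s : Set α} (hs : s.Finite) (n : ℕ) :
    {l : List α | l.length ≤ n ∧ ∀ a ∈ l, a ∈ s}.Finite := by
  have : Finite s := hs.to_subtype
  refine ((List.finite_length_le s n).image (List.map Subtype.val)).subset ?_
  rintro l ⟨hlen, hmem⟩
  exact ⟨l.pmap Subtype.mk hmem, by simpa using hlen, by simp [List.map_pmap]⟩

lemma List.finite_forall_pos_sum_le (N : ℕ) :
    {l : List ℕ | (∀ a ∈ l, 0 < a) ∧ l.sum ≤ N}.Finite := by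
  refine (List.finite_length_le_forall_mem (Set.finite_Iic N) N).subset ?_
  rintro l ⟨hpos, hsum⟩
  exact ⟨(List.length_le_sum_of_one_le l hpos).trans hsum,
    fun a ha => (List.le_sum_of_mem ha).trans hsum⟩

lemma setOf_isSemiStrictUnimodal_finite (n : ℕ) :
    {x : List ℕ × ℕ × List ℕ | IsSemiStrictUnimodal n x}.Finite := by
  have hparts := List.finite_forall_pos_sum_le n
  refine (hparts.prod ((Set.finite_Iic n).prod hparts)).subset ?_
  rintro ⟨l, p, r⟩ ⟨-, -, hl, hr, -, hsum⟩
  dsimp only at hl hr hsum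
  simp only [Set.mem_prod, Set.mem_ofPred_eq, Set.mem_Iic]
  exact ⟨⟨fun a ha => (hl a ha).1, by omega⟩, by omega, fun a ha => (hr a ha).1, by omega⟩

def bumpPeak (x : List ℕ × ℕ × List ℕ) : List ℕ × ℕ × List ℕ := (x.1, x.2.1 + 1, x.2.2)

lemma bumpPeak_injective : Function.Injective bumpPeak := by
  rintro ⟨l, p, r⟩ ⟨l', p', r'⟩ h
  simpa [bumpPeak] using h

lemma unimodalRank_bumpPeak (x : List ℕ × ℕ × List ℕ) :
    unimodalRank (bumpPeak x) = unimodalRank x := rfl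

lemma IsSemiStrictUnimodal.bumpPeak {n : ℕ} {x : List ℕ × ℕ × List ℕ}
    (hx : IsSemiStrictUnimodal n x) : IsSemiStrictUnimodal (n + 1) (bumpPeak x) := by
  obtain ⟨hl, hr, hlt, hgt, -, hsum⟩ := hx
  exact ⟨hl, hr, fun y hy => ⟨(hlt y hy).1, (hlt y hy).2.trans (Nat.lt_succ_self _)⟩,
    fun y hy => ⟨(hgt y hy).1, (hgt y hy).2.trans (Nat.lt_succ_self _)⟩,
    Nat.succ_pos _, by simp only [_root_.bumpPeak]; omega⟩

theorem semistrict_rank_counts_mono (m : ℤ) (n : ℕ) : dmCount m n ≤ dmCount m (n + 1) :=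
  Set.ncard_le_ncard_of_injOn bumpPeak
    (fun _ ⟨hx, hrank⟩ => ⟨hx.bumpPeak, (unimodalRank_bumpPeak _).trans hrank⟩)
    bumpPeak_injective.injOn
    ((setOf_isSemiStrictUnimodal_finite (n + 1)).subset fun _ hx => hx.1)
end

section
/- The two-variable generating function for the rank of semi-strict unimodal sequences satisfies ∑_{m,n} dm(m,n) ζ^m q^n = ∑_{n≥0} ((-ζ^{-1}q; q)_n / (ζq; q)_n) q^{n+1}. -/
/-!
A semi-strict unimodal sequence with peak `n + 1` is the same thing as a set `s` of distinct
parts `≤ n` (before the peak) together with a multiset `μ` of parts `≤ n` (after the peak), and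
its rank is `#μ - #s`. Choosing `s` is expanding `∏_{i ≤ n} (1 + ζ⁻¹ q^i)`, and choosing `μ`, a
partition into parts `≤ n` weighted by `ζ^(number of parts)`, is expanding
`∏_{i ≤ n} 1 / (1 - ζ q^i)`; the factor `q^(n + 1)` accounts for the peak.
-/

open Finset PowerSeries

theorem finsum_card_filter_nsmul {α ι M : Type*} [DecidableEq ι] [AddCommMonoid M] (s : Finset α)
    (r : α → ι) (g : ι → M) : ∑ᶠ i, #{a ∈ s | r a = i} • g i = ∑ a ∈ s, g (r a) := by
  rw [sum_comp, finsum_eq_sum_of_support_subset _ (s := s.image r)]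
  intro i hi
  by_contra hr
  apply hi
  dsimp only
  rw [filter_eq_empty_iff.mpr fun a ha (hai : r a = i) => hr (hai ▸ mem_image_of_mem r ha),
    card_empty, zero_smul]

namespace Nat.Partition

theorem toFinsuppAntidiag_mem_finsuppAntidiag_of_parts_mem {M : ℕ} {P : Finset ℕ}
    {p : M.Partition} (hp : ∀ i ∈ p.parts, i ∈ P) :
    p.toFinsuppAntidiag ∈ P.finsuppAntidiag M := by
  have hsupp : p.parts.toFinset ⊆ P := fun i hi => hp i (Multiset.mem_toFinset.mp hi)
  refine mem_finsuppAntidiag.mpr ⟨?_, hsupp⟩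
  simpa [toFinsuppAntidiag, sum_multiset_count_of_subset _ _ hsupp] using p.parts_sum

theorem exists_toFinsuppAntidiag_eq {M : ℕ} {P : Finset ℕ} (hP : 0 ∉ P) {d : ℕ →₀ ℕ}
    (hd : d ∈ P.finsuppAntidiag M) (hdvd : ∀ i ∈ P, i ∣ d i) :
    ∃ p ∈ restricted M (· ∈ P), p.toFinsuppAntidiag = d := by
  obtain ⟨hsum, hsupp⟩ := mem_finsuppAntidiag.mp hd
  set μ := ∑ i ∈ P, Multiset.replicate (d i / i) i
  have hμ : ∀ i ∈ μ, i ∈ P := fun i hi => by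
    obtain ⟨j, hj, hij⟩ := Multiset.mem_sum.mp hi
    rwa [Multiset.eq_of_mem_replicate hij]
  have hcount (j : ℕ) : μ.count j * j = d j := by
    by_cases hj : j ∈ P
    · simp [μ, Multiset.count_sum', Multiset.count_replicate, hj, Nat.div_mul_cancel (hdvd j hj)]
    · have : d j = 0 := Finsupp.notMem_support_iff.mp fun h => hj (hsupp h)
      simp [μ, Multiset.count_sum', Multiset.count_replicate, this]
  refine ⟨⟨μ, fun hi => Nat.pos_of_ne_zero fun h => hP (h ▸ hμ _ hi), ?_⟩, ?_, ?_⟩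
  · rw [sum_multiset_count_of_subset μ P fun i hi => hμ i (Multiset.mem_toFinset.mp hi), ← hsum]
    exact sum_congr rfl fun i _ => hcount i
  · simpa [restricted] using hμ
  · ext j
    exact hcount j

end Nat.Partition

/-- Grouped by the two sums, so that `coeff_mul` applies; see `mem_partPairs` for its members. -/
def partPairs (P : Finset ℕ) (M : ℕ) : Finset (Finset ℕ × Multiset ℕ) :=
  (antidiagonal M).biUnion fun uv =>
    {s ∈ P.powerset | ∑ i ∈ s, i = uv.1} ×ˢ
      (Nat.Partition.restricted uv.2 (· ∈ P)).image Nat.Partition.parts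

theorem mem_partPairs {P : Finset ℕ} (hP : 0 ∉ P) {M : ℕ} {x : Finset ℕ × Multiset ℕ} :
    x ∈ partPairs P M ↔ x.1 ⊆ P ∧ (∀ i ∈ x.2, i ∈ P) ∧ ∑ i ∈ x.1, i + x.2.sum = M := by
  obtain ⟨s, μ⟩ := x
  simp only [partPairs, mem_biUnion, HasAntidiagonal.mem_antidiagonal, mem_product, mem_filter,
    mem_powerset, mem_image, Nat.Partition.restricted, mem_univ, true_and]
  constructor
  · rintro ⟨uv, huv, ⟨hs, hsum⟩, p, hp, rfl⟩
    exact ⟨hs, hp, by rw [p.parts_sum, hsum, huv]⟩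
  · rintro ⟨hs, hμ, hsum⟩
    exact ⟨(_, μ.sum), hsum, ⟨hs, rfl⟩,
      ⟨μ, fun hi => Nat.pos_of_ne_zero fun h => hP (h ▸ hμ _ hi), rfl⟩, hμ, rfl⟩

namespace PowerSeries

variable {S : Type*} [CommRing S]

noncomputable def invOneSubCMulXPow (a : S) (i : ℕ) : S⟦X⟧ :=
  mk fun k => if i ∣ k then a ^ (k / i) else 0

theorem coeff_invOneSubCMulXPow (a : S) (i k : ℕ) :
    coeff k (invOneSubCMulXPow a i) = if i ∣ k then a ^ (k / i) else 0 :=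
  coeff_mk _ _

theorem invOneSubCMulXPow_eq_expand (a : S) {i : ℕ} (hi : i ≠ 0) :
    invOneSubCMulXPow a i = expand i hi (mk (a ^ ·)) := by
  ext k
  rw [coeff_invOneSubCMulXPow, coeff_expand]
  split_ifs <;> simp

theorem one_sub_C_mul_X_mul_mk_pow (a : S) : (1 - C a * X) * mk (a ^ ·) = 1 := by
  have hmk : mk (a ^ ·) = rescale a (mk 1) := by ext k; simp
  rw [hmk, ← rescale_X, ← map_one (rescale a), ← map_sub, ← map_mul, mul_comm,
    mk_one_mul_one_sub_eq_one, map_one]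

theorem one_sub_C_mul_X_pow_mul_invOneSubCMulXPow (a : S) {i : ℕ} (hi : i ≠ 0) :
    (1 - C a * X ^ i) * invOneSubCMulXPow a i = 1 := by
  rw [invOneSubCMulXPow_eq_expand a hi, ← expand_X i hi, ← expand_C i hi a, ← map_one (expand i hi),
    ← map_mul, ← map_sub, ← map_mul, one_sub_C_mul_X_mul_mk_pow, map_one]

theorem invOfUnit_prod_one_sub_C_mul_X_pow (a : S) {P : Finset ℕ} (hP : 0 ∉ P) :
    invOfUnit (∏ i ∈ P, (1 - C a * X ^ i)) 1 = ∏ i ∈ P, invOneSubCMulXPow a i := by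
  have hne : ∀ i ∈ P, i ≠ 0 := fun i hi h => hP (h ▸ hi)
  refine (left_inv_eq_right_inv (a := ∏ i ∈ P, (1 - C a * X ^ i)) ?_ (mul_invOfUnit _ _ ?_)).symm
  · rw [← prod_mul_distrib]
    exact prod_eq_one fun i hi => by
      rw [mul_comm, one_sub_C_mul_X_pow_mul_invOneSubCMulXPow a (hne i hi)]
  · rw [map_prod, Units.val_one]
    exact prod_eq_one fun i hi => by simp [hne i hi]

theorem coeff_prod_one_add_C_mul_X_pow (b : S) (P : Finset ℕ) (M : ℕ) :
    coeff M (∏ i ∈ P, (1 + C b * X ^ i)) = ∑ s ∈ P.powerset with ∑ i ∈ s, i = M, b ^ #s := by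
  have hterm (s : Finset ℕ) : ∏ i ∈ s, C b * X ^ i = C (b ^ #s) * X ^ (∑ i ∈ s, i) := by
    rw [prod_mul_distrib, prod_const, map_pow, prod_pow_eq_pow_sum]
  simp only [prod_one_add, hterm, map_sum, coeff_C_mul_X_pow, sum_ite, sum_const_zero, add_zero]
  exact sum_congr (filter_congr fun _ _ => eq_comm) fun _ _ => rfl

theorem coeff_prod_invOneSubCMulXPow (a : S) {P : Finset ℕ} (hP : 0 ∉ P) (M : ℕ) :
    coeff M (∏ i ∈ P, invOneSubCMulXPow a i) =
      ∑ p ∈ Nat.Partition.restricted M (· ∈ P), a ^ Multiset.card p.parts := by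
  rw [coeff_prod]
  refine (sum_of_injOn _ (Nat.Partition.toFinsuppAntidiag_injective M).injOn
    (fun p hp => Nat.Partition.toFinsuppAntidiag_mem_finsuppAntidiag_of_parts_mem
      (by simpa [Nat.Partition.restricted] using hp)) (fun d hd hd' => ?_) fun p hp => ?_).symm
  · by_contra hne
    have hdvd : ∀ i ∈ P, i ∣ d i := fun i hi => by
      by_contra h
      exact hne (prod_eq_zero hi (by simp [coeff_invOneSubCMulXPow, h]))
    obtain ⟨p, hp, rfl⟩ := Nat.Partition.exists_toFinsuppAntidiag_eq hP hd hdvd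
    exact hd' ⟨p, hp, rfl⟩
  · have hpP : ∀ i ∈ p.parts, i ∈ P := by simpa [Nat.Partition.restricted] using hp
    have hcoeff : ∀ i ∈ P, coeff (p.toFinsuppAntidiag i) (invOneSubCMulXPow a i) =
        a ^ p.parts.count i := fun i hi => by
      have : i ≠ 0 := fun h => hP (h ▸ hi)
      simp [Nat.Partition.toFinsuppAntidiag, coeff_invOneSubCMulXPow, this]
    rw [prod_congr rfl hcoeff, prod_pow_eq_pow_sum, Multiset.sum_count_eq_card hpP]

theorem coeff_prod_one_add_mul_prod_invOneSubCMulXPow (a b : S) {P : Finset ℕ} (hP : 0 ∉ P)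
    (M : ℕ) :
    coeff M ((∏ i ∈ P, (1 + C b * X ^ i)) * ∏ i ∈ P, invOneSubCMulXPow a i) =
      ∑ x ∈ partPairs P M, b ^ #x.1 * a ^ Multiset.card x.2 := by
  rw [coeff_mul, partPairs, sum_biUnion]
  · refine sum_congr rfl fun uv _ => ?_
    rw [coeff_prod_one_add_C_mul_X_pow, coeff_prod_invOneSubCMulXPow a hP, sum_mul_sum, sum_product]
    exact sum_congr rfl fun s _ => by rw [sum_image fun p _ q _ h => Nat.Partition.ext h]
  · have hsums (uv : ℕ × ℕ) (x) (hx : x ∈ {s ∈ P.powerset | ∑ i ∈ s, i = uv.1} ×ˢ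
        (Nat.Partition.restricted uv.2 (· ∈ P)).image Nat.Partition.parts) :
        (∑ i ∈ x.1, i, x.2.sum) = uv := by
      simp only [mem_product, mem_filter, mem_image] at hx
      obtain ⟨⟨_, hs⟩, p, _, hp⟩ := hx
      rw [hs, ← hp, p.parts_sum]
    exact fun uv _ uv' _ hne => disjoint_left.mpr fun x hx hx' =>
      hne ((hsums uv x hx).symm.trans (hsums uv' x hx'))

end PowerSeries

/-- `⟨n, s, μ⟩` encodes the sequence with peak `n + 1`, parts `s` before it and `μ` after it. -/
def unimodalShapes (N : ℕ) : Finset (Σ _ : ℕ, Finset ℕ × Multiset ℕ) :=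
  (range N).sigma fun n => partPairs (Ico 1 (n + 1)) (N - (n + 1))

def shapeRank (σ : Σ _ : ℕ, Finset ℕ × Multiset ℕ) : ℤ := (Multiset.card σ.2.2 : ℤ) - #σ.2.1

def toShape (x : List ℕ × ℕ × List ℕ) : Σ _ : ℕ, Finset ℕ × Multiset ℕ :=
  ⟨x.2.1 - 1, x.1.toFinset, x.2.2⟩

def ofShape (σ : Σ _ : ℕ, Finset ℕ × Multiset ℕ) : List ℕ × ℕ × List ℕ :=
  (σ.2.1.sort, σ.1 + 1, σ.2.2.sort (· ≥ ·))

theorem mem_unimodalShapes {N : ℕ} {σ : Σ _ : ℕ, Finset ℕ × Multiset ℕ} :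
    σ ∈ unimodalShapes N ↔ σ.1 < N ∧ σ.2.1 ⊆ Ico 1 (σ.1 + 1) ∧
      (∀ i ∈ σ.2.2, i ∈ Ico 1 (σ.1 + 1)) ∧ ∑ i ∈ σ.2.1, i + σ.2.2.sum = N - (σ.1 + 1) := by
  rw [unimodalShapes, mem_sigma, mem_range, mem_partPairs (by simp)]

namespace IsSemiStrictUnimodal

variable {N : ℕ} {x : List ℕ × ℕ × List ℕ}

theorem toShape_mem (h : IsSemiStrictUnimodal N x) : toShape x ∈ unimodalShapes N := by
  obtain ⟨l₁, c, l₂⟩ := x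
  obtain ⟨h₁, -, hl₁, hl₂, hc, hsum⟩ := h
  dsimp only at h₁ hl₁ hl₂ hc hsum
  have hmem : ∀ y, 0 < y ∧ y < c → y ∈ Ico 1 (c - 1 + 1) := fun y hy => by
    rw [mem_Ico]; omega
  refine mem_unimodalShapes.mpr ⟨by dsimp only [toShape]; omega,
    fun y hy => hmem y (hl₁ y (List.mem_toFinset.mp hy)), fun y hy => hmem y (hl₂ y hy), ?_⟩
  simp only [toShape]
  rw [List.sum_toFinset _ h₁.nodup, List.map_id', Multiset.sum_coe]
  omega

theorem ofShape_toShape (h : IsSemiStrictUnimodal N x) : ofShape (toShape x) = x := by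
  obtain ⟨l₁, c, l₂⟩ := x
  obtain ⟨h₁, h₂, -, -, hc, -⟩ := h
  dsimp only at h₁ h₂ hc
  simp only [ofShape, toShape, Prod.mk.injEq]
  refine ⟨(List.toFinset_sort _ h₁.nodup).mpr (h₁.imp le_of_lt), by omega, ?_⟩
  rw [Multiset.coe_sort, List.mergeSort_eq_self _ h₂]

theorem unimodalRank_eq (h : IsSemiStrictUnimodal N x) :
    unimodalRank x = shapeRank (toShape x) := by
  simp [unimodalRank, shapeRank, toShape, List.toFinset_card_of_nodup h.1.nodup]

end IsSemiStrictUnimodal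

theorem toShape_ofShape (σ : Σ _ : ℕ, Finset ℕ × Multiset ℕ) : toShape (ofShape σ) = σ := by
  simp [toShape, ofShape]

theorem isSemiStrictUnimodal_ofShape {N : ℕ} {σ : Σ _ : ℕ, Finset ℕ × Multiset ℕ}
    (hσ : σ ∈ unimodalShapes N) : IsSemiStrictUnimodal N (ofShape σ) := by
  obtain ⟨n, s, μ⟩ := σ
  obtain ⟨hn, hs, hμ, hsum⟩ := mem_unimodalShapes.mp hσ
  dsimp only at hn hs hμ hsum
  refine ⟨List.sortedLT_iff_pairwise.mp (sortedLT_sort s), Multiset.pairwise_sort _ _,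
    fun y hy => ?_, fun y hy => ?_, n.succ_pos, ?_⟩
  · have := mem_Ico.mp (hs ((mem_sort _).mp hy))
    simp only [ofShape]; omega
  · have := mem_Ico.mp (hμ y ((Multiset.mem_sort _).mp hy))
    simp only [ofShape]; omega
  · have hs_sum : s.val.sum = ∑ i ∈ s, i := sum_val s
    simp only [ofShape]
    rw [← Multiset.sum_coe, sort_eq, ← Multiset.sum_coe, Multiset.sort_eq, hs_sum]
    omega

theorem bijOn_toShape (N : ℕ) :
    Set.BijOn toShape {x | IsSemiStrictUnimodal N x} (unimodalShapes N) :=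
  Set.InvOn.bijOn ⟨fun _ hx => IsSemiStrictUnimodal.ofShape_toShape hx,
    fun σ _ => toShape_ofShape σ⟩ (fun _ hx => IsSemiStrictUnimodal.toShape_mem hx)
    fun _ hσ => isSemiStrictUnimodal_ofShape hσ

theorem dmCount_eq_card_filter (m : ℤ) (N : ℕ) :
    dmCount m N = #{σ ∈ unimodalShapes N | shapeRank σ = m} := by
  have hset : {x | IsSemiStrictUnimodal N x ∧ unimodalRank x = m} =
      {x | IsSemiStrictUnimodal N x} ∩ toShape ⁻¹' {σ | shapeRank σ = m} := by
    ext x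
    simp only [Set.mem_inter_iff, Set.mem_preimage]
    exact and_congr_right fun h => by rw [h.unimodalRank_eq]; rfl
  rw [dmCount, ← Set.ncard_coe_finset, coe_filter, hset,
    ← ((bijOn_toShape N).injOn.mono Set.inter_subset_left).ncard_image,
    Set.image_inter_preimage, (bijOn_toShape N).image_eq]
  rfl

open LaurentPolynomial in
theorem coeff_pochhammer_quotient (n M : ℕ) :
    coeff M ((∏ j ∈ range n, (1 + PowerSeries.C (T (-1) : LaurentPolynomial ℚ) * X ^ (j + 1))) *
        invOfUnit (∏ j ∈ range n, (1 - PowerSeries.C (T 1 : LaurentPolynomial ℚ) * X ^ (j + 1)))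
          1) =
      ∑ x ∈ partPairs (Ico 1 (n + 1)) M, T ((Multiset.card x.2 : ℤ) - #x.1) := by
  have hshift (f : ℕ → (LaurentPolynomial ℚ)⟦X⟧) :
      ∏ j ∈ range n, f (j + 1) = ∏ i ∈ Ico 1 (n + 1), f i := by
    rw [range_eq_Ico, prod_Ico_add']
  have h0 : 0 ∉ Ico 1 (n + 1) := by simp
  rw [hshift (fun i => 1 + PowerSeries.C _ * X ^ i), hshift (fun i => 1 - PowerSeries.C _ * X ^ i),
    invOfUnit_prod_one_sub_C_mul_X_pow _ h0, coeff_prod_one_add_mul_prod_invOneSubCMulXPow _ _ h0]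
  refine sum_congr rfl fun x _ => ?_
  rw [T_pow, T_pow, ← T_add]
  congr 1
  ring

open LaurentPolynomial PowerSeries in
/-- `∑_{m,n} dm(m,n) ζ^m q^n = ∑_{n≥0} ((-ζ⁻¹q;q)_n / (ζq;q)_n) q^{n+1}`, stated
coefficientwise in `q`, with coefficients in the ring of Laurent polynomials in `ζ`;
terms with `n ≥ N` contribute nothing to the coefficient of `q^N`. -/
theorem semistrict_rank_generating_function (N : ℕ) :
    (∑ᶠ m : ℤ, (dmCount m N : ℚ) • (T m : LaurentPolynomial ℚ)) =
      PowerSeries.coeff (R := LaurentPolynomial ℚ) N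
        (∑ n ∈ Finset.range (N + 1),
          (∏ j ∈ Finset.range n,
              (1 + PowerSeries.C (R := LaurentPolynomial ℚ) (T (-1)) * PowerSeries.X ^ (j + 1))) *
            PowerSeries.invOfUnit
              (∏ j ∈ Finset.range n,
                  (1 - PowerSeries.C (R := LaurentPolynomial ℚ) (T 1) * PowerSeries.X ^ (j + 1)))
              1 *
            PowerSeries.X ^ (n + 1)) := by
  simp_rw [dmCount_eq_card_filter, Nat.cast_smul_eq_nsmul, finsum_card_filter_nsmul]
  rw [unimodalShapes, sum_sigma, map_sum, sum_range_succ, coeff_mul_X_pow', if_neg (by omega),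
    add_zero]
  refine sum_congr rfl fun n hn => ?_
  have hnN : n + 1 ≤ N := mem_range.mp hn
  rw [coeff_mul_X_pow', if_pos hnN, coeff_pochhammer_quotient]
  rfl
end

section
/- The k-th moment of the logistic distribution with mean 0 and scale 1/π satisfies ∫_{-∞}^{∞} x^k · (π e^{-πx}/(1 + e^{-πx})^2) dx = (2^k - 2)|B_k| for every k ≥ 1, and the integral equals 1 for k = 0. -/
open Real MeasureTheory Set Filter Topology

private theorem logistic_f_even (x : ℝ) : π * exp (-π * -x) / (1 + exp (-π * -x)) ^ 2
    = π * exp (-π * x) / (1 + exp (-π * x)) ^ 2 := by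
  have h : exp (-π * -x) = (exp (-π * x))⁻¹ := by rw [← exp_neg]; ring_nf
  rw [h]
  have hu : (0:ℝ) < exp (-π * x) := exp_pos _
  field_simp; ring

private theorem logistic_f_deriv (x : ℝ) : HasDerivAt (fun y : ℝ => (1 + exp (-π * y))⁻¹)
    (π * exp (-π * x) / (1 + exp (-π * x)) ^ 2) x := by
  have h := ((((hasDerivAt_id x).const_mul (-π)).exp).const_add 1).inv
    (by positivity : (1 + exp (-π * x)) ≠ 0)
  convert h using 1
  any_goals rfl
  simp only [id_eq]; field_simp

private theorem logistic_f_cont :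
    Continuous fun x : ℝ => π * exp (-π * x) / (1 + exp (-π * x)) ^ 2 := by
  apply Continuous.div
  · fun_prop
  · fun_prop
  · intro x; positivity

private theorem logistic_f_intOn :
    IntegrableOn (fun x : ℝ => π * exp (-π * x) / (1 + exp (-π * x)) ^ 2) (Ioi 0) := by
  apply Integrable.mono' ((exp_neg_integrableOn_Ioi 0 pi_pos).const_mul π)
  · exact logistic_f_cont.aestronglyMeasurable.restrict
  · filter_upwards with x
    rw [Real.norm_eq_abs, abs_of_nonneg (by positivity)]
    rw [div_le_iff₀ (by positivity)]
    have hq := exp_pos (-π * x)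
    nlinarith [mul_pos pi_pos hq, mul_nonneg (mul_pos pi_pos hq).le hq.le,
      mul_nonneg (mul_nonneg (mul_pos pi_pos hq).le hq.le) hq.le]

private theorem logistic_f_int_Ioi :
    (∫ x in Ioi (0:ℝ), π * exp (-π * x) / (1 + exp (-π * x)) ^ 2) = 1/2 := by
  have ht : Tendsto (fun y : ℝ => (1 + exp (-π * y))⁻¹) atTop (𝓝 1) := by
    have h1 : Tendsto (fun y : ℝ => -π * y) atTop atBot :=
      (tendsto_const_mul_atBot_of_neg (neg_neg_iff_pos.mpr pi_pos)).mpr tendsto_id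
    have := (Real.tendsto_exp_atBot.comp h1).const_add 1
    have h2 := this.inv₀ (by norm_num)
    simpa using h2
  have := integral_Ioi_of_hasDerivAt_of_tendsto' (f := fun y : ℝ => (1 + exp (-π * y))⁻¹)
    (fun x _ => logistic_f_deriv x) logistic_f_intOn ht
  rw [this]
  norm_num

private theorem logistic_part1 :
    (∫ x : ℝ, π * exp (-π * x) / (1 + exp (-π * x)) ^ 2) = 1 := by
  have h : ∀ x : ℝ, π * exp (-π * |x|) / (1 + exp (-π * |x|)) ^ 2
      = π * exp (-π * x) / (1 + exp (-π * x)) ^ 2 := by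
    intro x
    rcases abs_cases x with ⟨h, _⟩ | ⟨h, _⟩
    · rw [h]
    · rw [h]; exact logistic_f_even x
  calc (∫ x : ℝ, π * exp (-π * x) / (1 + exp (-π * x)) ^ 2)
      = ∫ x : ℝ, π * exp (-π * |x|) / (1 + exp (-π * |x|)) ^ 2 := by
        congr 1; ext x; rw [h x]
    _ = 2 * ∫ x in Ioi (0:ℝ), π * exp (-π * x) / (1 + exp (-π * x)) ^ 2 :=
        integral_comp_abs (f := fun x => π * exp (-π * x) / (1 + exp (-π * x)) ^ 2)
    _ = 1 := by rw [logistic_f_int_Ioi]; norm_num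

private theorem logistic_pointwise_sum (k : ℕ) {x : ℝ} (hx : 0 < x) :
    HasSum (fun n : ℕ => ((-1:ℝ)^(n+1) * n * π) * (x^k * exp (-((n:ℝ)*π) * x)))
      (x^k * (π * exp (-π * x) / (1 + exp (-π * x)) ^ 2)) := by
  set q := exp (-π * x) with hq
  have hq0 : 0 < q := exp_pos _
  have hq1 : q < 1 := by
    rw [hq, exp_lt_one_iff]
    nlinarith [pi_pos]
  have h := hasSum_coe_mul_geometric_of_norm_lt_one (r := -q)
    (by rw [norm_neg, Real.norm_eq_abs, abs_of_pos hq0]; exact hq1)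
  have h2 := h.mul_left (-(π * x^k))
  have hfun : (fun n : ℕ => ((-1:ℝ)^(n+1) * n * π) * (x^k * exp (-((n:ℝ)*π) * x)))
      = fun n : ℕ => -(π * x^k) * ((n:ℝ) * (-q)^n) := by
    funext n
    have he : exp (-((n:ℝ)*π) * x) = q ^ n := by
      rw [hq, ← Real.exp_nat_mul]; ring_nf
    rw [he, neg_pow, pow_succ]
    ring
  rw [hfun]
  convert h2 using 1
  any_goals rfl
  rw [sub_neg_eq_add]
  field_simp

private theorem logistic_base_integral (k : ℕ) {n : ℕ} (hn : 0 < n) :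
    ∫ x in Ioi (0:ℝ), x^k * exp (-((n:ℝ)*π) * x)
      = ((Nat.factorial k : ℕ) : ℝ) / ((n:ℝ)*π)^(k+1) := by
  have hb : (0:ℝ) < n * π := by positivity
  have h := integral_rpow_mul_exp_neg_mul_Ioi (a := (k:ℝ)+1) (r := (n:ℝ)*π)
    (by positivity) hb
  rw [show ((k:ℝ)+1-1) = (k:ℝ) by ring] at h
  have h2 : ∫ x in Ioi (0:ℝ), x^k * exp (-((n:ℝ)*π) * x)
      = (1/((n:ℝ)*π)) ^ ((k:ℝ)+1) * Real.Gamma ((k:ℝ)+1) := by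
    rw [← h]
    refine setIntegral_congr_fun measurableSet_Ioi (fun t ht => ?_)
    rw [rpow_natCast]
    ring_nf
  rw [h2, Real.Gamma_nat_eq_factorial k,
    show ((k:ℝ)+1) = ((k+1 : ℕ):ℝ) by push_cast; ring, rpow_natCast]
  rw [one_div, inv_pow]
  field_simp

private theorem logistic_term_integrable (k : ℕ) {n : ℕ} (hn : 0 < n) :
    IntegrableOn (fun x : ℝ => x^k * exp (-((n:ℝ)*π) * x)) (Ioi 0) := by
  have h := integrableOn_rpow_mul_exp_neg_mul_rpow (p := 1) (s := (k:ℝ)) (b := (n:ℝ)*π)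
    (lt_of_lt_of_le (by norm_num) (Nat.cast_nonneg k)) zero_lt_one (by positivity)
  refine h.congr_fun (fun x hx => ?_) measurableSet_Ioi
  dsimp only
  rw [rpow_one, rpow_natCast]

private theorem logistic_term_val (k : ℕ) (hk : 1 ≤ k) (n : ℕ) :
    (∫ x in Ioi (0:ℝ), ((-1:ℝ)^(n+1) * n * π) * (x^k * exp (-((n:ℝ)*π) * x)))
      = (((Nat.factorial k : ℕ):ℝ) / π^k) * ((-1:ℝ)^(n+1) / (n:ℝ)^k) := by
  rcases Nat.eq_zero_or_pos n with rfl | hn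
  · simp [zero_pow (by omega : k ≠ 0)]
  · rw [integral_const_mul, logistic_base_integral k hn]
    have hπ : π ≠ 0 := pi_ne_zero
    have hn' : (n:ℝ) ≠ 0 := Nat.cast_ne_zero.mpr hn.ne'
    rw [mul_pow, pow_succ, pow_succ]
    field_simp
    ring

private theorem logistic_norm_term_val (k : ℕ) (hk : 1 ≤ k) (n : ℕ) :
    (∫ x in Ioi (0:ℝ), ‖((-1:ℝ)^(n+1) * n * π) * (x^k * exp (-((n:ℝ)*π) * x))‖)
      = (((Nat.factorial k : ℕ):ℝ) / π^k) * (1 / (n:ℝ)^k) := by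
  have h : ∀ x ∈ Ioi (0:ℝ), ‖((-1:ℝ)^(n+1) * n * π) * (x^k * exp (-((n:ℝ)*π) * x))‖
      = ((n:ℝ) * π) * (x^k * exp (-((n:ℝ)*π) * x)) := by
    intro x hx
    have hx' : 0 < x := hx
    rw [Real.norm_eq_abs, abs_mul, abs_mul, abs_mul, abs_pow, abs_neg, abs_one, one_pow,
      one_mul, Nat.abs_cast, abs_of_pos pi_pos,
      abs_of_nonneg (by positivity : (0:ℝ) ≤ x^k * exp (-((n:ℝ)*π) * x))]
  rw [setIntegral_congr_fun measurableSet_Ioi h]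
  rcases Nat.eq_zero_or_pos n with rfl | hn
  · simp [zero_pow (by omega : k ≠ 0)]
  · rw [integral_const_mul, logistic_base_integral k hn]
    have hπ : π ≠ 0 := pi_ne_zero
    have hn' : (n:ℝ) ≠ 0 := Nat.cast_ne_zero.mpr hn.ne'
    rw [mul_pow, pow_succ, pow_succ]
    field_simp

private theorem logistic_core (k : ℕ) (hk : 2 ≤ k) :
    HasSum (fun n : ℕ => (((Nat.factorial k : ℕ):ℝ) / π^k) * ((-1:ℝ)^(n+1) / (n:ℝ)^k))
      (∫ x in Ioi (0:ℝ), x^k * (π * exp (-π * x) / (1 + exp (-π * x)) ^ 2)) := by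
  have hFint : ∀ n : ℕ, Integrable
      (fun x : ℝ => ((-1:ℝ)^(n+1) * n * π) * (x^k * exp (-((n:ℝ)*π) * x)))
      (volume.restrict (Ioi 0)) := by
    intro n
    rcases Nat.eq_zero_or_pos n with rfl | hn
    · simp only [Nat.cast_zero, zero_mul, mul_zero, mul_comm]
      simp
    · exact ((logistic_term_integrable k hn).const_mul _)
  have hsum : Summable fun n : ℕ =>
      ∫ x in Ioi (0:ℝ), ‖((-1:ℝ)^(n+1) * n * π) * (x^k * exp (-((n:ℝ)*π) * x))‖ := by
    have : (fun n : ℕ => ∫ x in Ioi (0:ℝ),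
        ‖((-1:ℝ)^(n+1) * n * π) * (x^k * exp (-((n:ℝ)*π) * x))‖)
        = fun n : ℕ => (((Nat.factorial k : ℕ):ℝ) / π^k) * (1 / (n:ℝ)^k) := by
      funext n; exact logistic_norm_term_val k (by omega) n
    rw [this]
    exact (summable_one_div_nat_pow.mpr (by omega)).mul_left _
  have h := hasSum_integral_of_summable_integral_norm hFint hsum
  have heq : (∫ x in Ioi (0:ℝ), ∑' n : ℕ,
      ((-1:ℝ)^(n+1) * n * π) * (x^k * exp (-((n:ℝ)*π) * x)))
      = ∫ x in Ioi (0:ℝ), x^k * (π * exp (-π * x) / (1 + exp (-π * x)) ^ 2) := by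
    refine setIntegral_congr_fun measurableSet_Ioi (fun x hx => ?_)
    exact (logistic_pointwise_sum k hx).tsum_eq
  rw [heq] at h
  have hvals : (fun n : ℕ => ∫ x in Ioi (0:ℝ),
      ((-1:ℝ)^(n+1) * n * π) * (x^k * exp (-((n:ℝ)*π) * x)))
      = fun n : ℕ => (((Nat.factorial k : ℕ):ℝ) / π^k) * ((-1:ℝ)^(n+1) / (n:ℝ)^k) := by
    funext n; exact logistic_term_val k (by omega) n
  rwa [hvals] at h

private theorem logistic_eta_hasSum (m : ℕ) (hm : 1 ≤ m) :
    HasSum (fun n : ℕ => (-1:ℝ)^(n+1) / (n:ℝ)^(2*m))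
      ((1 - 2 * ((2:ℝ)⁻¹)^(2*m)) *
        ((-1:ℝ)^(m+1) * (2:ℝ)^(2*m-1) * π^(2*m) * ((bernoulli (2*m) : ℚ) : ℝ)
          / (Nat.factorial (2*m)))) := by
  set Z : ℝ := (-1:ℝ)^(m+1) * (2:ℝ)^(2*m-1) * π^(2*m) * ((bernoulli (2*m) : ℚ) : ℝ)
      / (Nat.factorial (2*m)) with hZ
  have h1 : HasSum (fun n : ℕ => 1 / (n:ℝ)^(2*m)) Z := hasSum_zeta_nat (by omega)
  have h2 := h1.mul_left (((2:ℝ)⁻¹)^(2*m))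
  have h3 : HasSum (fun n : ℕ => if Even n then 1/(n:ℝ)^(2*m) else 0)
      (((2:ℝ)⁻¹)^(2*m) * Z) := by
    have hinj : Function.Injective (fun n : ℕ => 2 * n) :=
      fun a b h => by simp only [] at h; omega
    rw [← Function.Injective.hasSum_iff hinj ?_]
    · convert h2 using 1
      any_goals rfl
      funext n
      simp only [Function.comp]
      rw [if_pos (even_two_mul n)]
      rcases Nat.eq_zero_or_pos n with rfl | hn
      · simp [zero_pow (by omega : 2*m ≠ 0)]
      · have hn' : ((n:ℝ)) ≠ 0 := Nat.cast_ne_zero.mpr hn.ne'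
        push_cast
        rw [mul_pow]
        field_simp
        rw [← mul_pow]; norm_num
    · intro x hx
      rw [if_neg]
      intro hev
      obtain ⟨r, hr⟩ := hev
      exact hx ⟨r, by simp only []; omega⟩
  have h4 := h1.sub (h3.mul_left 2)
  have hfun : (fun n : ℕ => 1/(n:ℝ)^(2*m) - 2 * (if Even n then 1/(n:ℝ)^(2*m) else 0))
      = fun n : ℕ => (-1:ℝ)^(n+1) / (n:ℝ)^(2*m) := by
    funext n
    by_cases h : Even n
    · rw [if_pos h, pow_succ, h.neg_one_pow]
      ring
    · rw [if_neg h, pow_succ, (Nat.odd_iff.mpr (Nat.not_even_iff.mp h)).neg_one_pow]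
      ring
  rw [hfun] at h4
  convert h4 using 1
  any_goals rfl
  ring

private theorem logistic_odd_zero {F : ℝ → ℝ} (h : ∀ x, F (-x) = - F x) :
    ∫ x : ℝ, F x = 0 := by
  have h1 := MeasureTheory.integral_neg_eq_self F volume
  have h2 : (∫ x : ℝ, F (-x)) = ∫ x : ℝ, -(F x) := by simp only [h]
  rw [h2, integral_neg] at h1
  linarith

private theorem logistic_part2 (k : ℕ) (hk : 1 ≤ k) :
    (∫ x : ℝ, x ^ k * (π * exp (-π * x) / (1 + exp (-π * x)) ^ 2)) =
      ((2 : ℝ) ^ k - 2) * |(bernoulli k : ℝ)| := by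
  rcases Nat.even_or_odd k with hev | hodd
  · -- even case
    have habs : ∀ x : ℝ, |x| ^ k * (π * exp (-π * |x|) / (1 + exp (-π * |x|)) ^ 2)
        = x ^ k * (π * exp (-π * x) / (1 + exp (-π * x)) ^ 2) := by
      intro x
      rw [hev.pow_abs]
      congr 1
      rcases abs_cases x with ⟨h, _⟩ | ⟨h, _⟩
      · rw [h]
      · rw [h]; exact logistic_f_even x
    obtain ⟨m, hmm⟩ := hev
    have hm1 : 1 ≤ m := by omega
    have hk2m : k = 2 * m := by omega
    have hdouble : (∫ x : ℝ, x ^ k * (π * exp (-π * x) / (1 + exp (-π * x)) ^ 2))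
        = 2 * ∫ x in Ioi (0:ℝ), x ^ k * (π * exp (-π * x) / (1 + exp (-π * x)) ^ 2) := by
      calc (∫ x : ℝ, x ^ k * (π * exp (-π * x) / (1 + exp (-π * x)) ^ 2))
          = ∫ x : ℝ, |x| ^ k * (π * exp (-π * |x|) / (1 + exp (-π * |x|)) ^ 2) := by
            congr 1; ext x; rw [habs x]
        _ = 2 * ∫ x in Ioi (0:ℝ), x ^ k * (π * exp (-π * x) / (1 + exp (-π * x)) ^ 2) :=
            integral_comp_abs
              (f := fun x => x ^ k * (π * exp (-π * x) / (1 + exp (-π * x)) ^ 2))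
    have hcore := logistic_core k (by omega)
    have heta := (logistic_eta_hasSum m hm1).mul_left (((Nat.factorial k : ℕ):ℝ) / π^k)
    rw [← hk2m] at heta
    have hI := hcore.unique heta
    rw [hdouble, hI]
    -- positivity of the zeta value
    have hZpos : (0:ℝ) < (-1:ℝ)^(m+1) * (2:ℝ)^(k-1) * π^k * ((bernoulli k : ℚ) : ℝ)
        / (Nat.factorial k) := by
      have h1 : HasSum (fun n : ℕ => 1 / (n:ℝ)^(2*m))
          ((-1:ℝ)^(m+1) * (2:ℝ)^(2*m-1) * π^(2*m) * ((bernoulli (2*m) : ℚ) : ℝ)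
            / (Nat.factorial (2*m))) := hasSum_zeta_nat (by omega)
      rw [← hk2m] at h1
      have hle := le_hasSum h1 1 (fun n _ => by positivity)
      simp only [Nat.cast_one, one_pow] at hle
      linarith
    have hsign : |((bernoulli k : ℚ) : ℝ)| = (-1:ℝ)^(m+1) * ((bernoulli k : ℚ) : ℝ) := by
      have hc : (0:ℝ) < (2:ℝ)^(k-1) * π^k / (Nat.factorial k) := by positivity
      have hpos : 0 < (-1:ℝ)^(m+1) * ((bernoulli k : ℚ) : ℝ) := by
        have h := hZpos
        rw [show (-1:ℝ)^(m+1) * (2:ℝ)^(k-1) * π^k * ((bernoulli k : ℚ) : ℝ)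
            / (Nat.factorial k)
            = ((2:ℝ)^(k-1) * π^k / (Nat.factorial k))
              * ((-1:ℝ)^(m+1) * ((bernoulli k : ℚ) : ℝ)) by ring] at h
        nlinarith [hc, h]
      have habs1 : |(-1:ℝ)^(m+1) * ((bernoulli k : ℚ) : ℝ)| = |((bernoulli k : ℚ) : ℝ)| := by
        rw [abs_mul, abs_pow, abs_neg, abs_one, one_pow, one_mul]
      rw [← habs1, abs_of_pos hpos]
    rw [hsign]
    have hπk : (π:ℝ)^k ≠ 0 := by positivity
    have hfac : ((Nat.factorial k : ℕ):ℝ) ≠ 0 := by positivity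
    have h2k : (2:ℝ)^k = 2 * 2^(k-1) := by
      rw [← pow_succ']
      congr 1
      omega
    have hinv : ((2:ℝ)⁻¹)^k = (2 * 2^(k-1))⁻¹ := by rw [inv_pow, h2k]
    rw [h2k, hinv]
    have h2km : (0:ℝ) < 2^(k-1) := by positivity
    field_simp
  · -- odd case
    have hzero : (∫ x : ℝ, x ^ k * (π * exp (-π * x) / (1 + exp (-π * x)) ^ 2)) = 0 := by
      apply logistic_odd_zero
      intro x
      rw [logistic_f_even x, hodd.neg_pow]
      ring
    rw [hzero]
    rcases eq_or_lt_of_le hk with h1 | h1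
    · rw [← h1]
      norm_num
    · have hb : bernoulli k = 0 := by
        rw [bernoulli_eq_bernoulli'_of_ne_one (by omega)]
        exact bernoulli'_eq_zero_of_odd hodd (by omega)
      rw [hb]
      simp

/-- The moments of the logistic distribution with mean `0` and scale `1/π`:
the density integrates to `1`, and the `k`-th moment equals `(2^k - 2)|B_k|`
for `k ≥ 1`. -/
theorem logistic_moments :
    (∫ x : ℝ, π * exp (-π * x) / (1 + exp (-π * x)) ^ 2) = 1 ∧
    ∀ k : ℕ, 1 ≤ k →
      (∫ x : ℝ, x ^ k * (π * exp (-π * x) / (1 + exp (-π * x)) ^ 2)) =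
        ((2 : ℝ) ^ k - 2) * |(bernoulli k : ℝ)| := by
  exact ⟨logistic_part1, fun k hk => logistic_part2 k hk⟩
end
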